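/- arXiv:1808.07296 — 2 statements merged into one kernel-verified Lean document; each statement's English description precedes it below -/
import Mathlib

section
/- For all natural numbers i ≤ j, the binomial coefficients satisfy the congruence C(2j, 2i) ≡ C(j, i) (mod 4). -/
/-!
Applying Pascal's rule twice gives `C(n+2, k+2) = C(n, k) + 2 C(n, k+1) + C(n, k+2)`. For
`n = 2j`, `k = 2i` the middle coefficient `C(2j, 2i+1)` is even (Lucas's theorem mod 2), so modulo
4 the recursion for `C(2j, 2i)` in `j` is Pascal's rule for `C(j, i)`, and induction on `j` applies.
-/

namespace Nat

theorem choose_add_two_add_two (n k : ℕ) :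
    (n + 2).choose (k + 2) = n.choose k + 2 * n.choose (k + 1) + n.choose (k + 2) := by
  simp only [choose_succ_succ]
  ring

theorem two_dvd_choose_two_mul_two_mul_add_one (n k : ℕ) : 2 ∣ (2 * n).choose (2 * k + 1) := by
  have lucas :=
    Choose.choose_modEq_choose_mod_mul_choose_div_nat (p := 2) (n := 2 * n) (k := 2 * k + 1)
  rw [mul_mod_right, show (2 * k + 1) % 2 = 1 by omega, choose_zero_succ, zero_mul] at lucas
  exact modEq_zero_iff_dvd.mp lucas

end Nat

theorem choose_double_mod_four_general (i j : ℕ) :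
    Nat.choose (2 * j) (2 * i) ≡ Nat.choose j i [MOD 4] := by
  induction j generalizing i with
  | zero => cases i <;> rfl
  | succ j ih =>
    cases i with
    | zero => simp only [mul_zero, Nat.choose_zero_right]; rfl
    | succ i =>
      have middle_term : 2 * (2 * j).choose (2 * i + 1) ≡ 0 [MOD 4] :=
        Nat.modEq_zero_iff_dvd.mpr
          (mul_dvd_mul_left 2 (Nat.two_dvd_choose_two_mul_two_mul_add_one j i))
      calc (2 * (j + 1)).choose (2 * (i + 1))
          = (2 * j).choose (2 * i) + 2 * (2 * j).choose (2 * i + 1)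
              + (2 * j).choose (2 * (i + 1)) := by
            rw [mul_add_one, mul_add_one, Nat.choose_add_two_add_two]
        _ ≡ j.choose i + 0 + j.choose (i + 1) [MOD 4] := ((ih i).add middle_term).add (ih (i + 1))
        _ = (j + 1).choose (i + 1) := by rw [add_zero, Nat.choose_succ_succ]

/-- For all natural numbers `i ≤ j`, `C(2j, 2i) ≡ C(j, i) (mod 4)`. -/
theorem choose_double_mod_four (i j : ℕ) (h : i ≤ j) :
    Nat.choose (2 * j) (2 * i) ≡ Nat.choose j i [MOD 4] :=
  choose_double_mod_four_general i j
end

section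
/- Let F be a field and let V, W be finite-dimensional F-vector spaces with dim V = m and dim W = n. Then there exists an F-linear equivalence ⋀^{mn}(V ⊗ W) ≃ (⋀^m V)^{⊗ n} ⊗ (⋀^n W)^{⊗ m}. -/
/-!
Both sides are lines: `V ⊗ W` has dimension `mn`, so its top exterior power has dimension
`choose (mn) (mn) = 1`, while `⋀^m V` and `⋀^n W` are lines, hence so are their tensor powers and
the tensor product of those. Two one-dimensional spaces are isomorphic.
-/

open TensorProduct Module

namespace PiTensorProduct

variable {ι R : Type*} {M : ι → Type*} [CommRing R] [∀ i, AddCommGroup (M i)]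
  [∀ i, Module R (M i)] [∀ i, Free R (M i)]

instance instFree [Finite ι] : Free R (⨂[R] i, M i) :=
  .of_basis (Basis.piTensorProduct fun i => Free.chooseBasis R (M i))

theorem finrank_eq [Fintype ι] [StrongRankCondition R] [∀ i, Module.Finite R (M i)] :
    finrank R (⨂[R] i, M i) = ∏ i, finrank R (M i) := by
  classical
  rw [finrank_eq_card_basis (Basis.piTensorProduct fun i => Free.chooseBasis R (M i)),
    Fintype.card_pi]
  simp only [finrank_eq_card_chooseBasisIndex]

end PiTensorProduct

/-- For finite-dimensional `F`-vector spaces `V`, `W` of dimensions `m`, `n`, there is an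
`F`-linear equivalence `⋀^{mn}(V ⊗ W) ≃ (⋀^m V)^{⊗n} ⊗ (⋀^n W)^{⊗m}`. -/
theorem det_of_tensor_product (F : Type) [Field F]
    (V W : Type) [AddCommGroup V] [Module F V] [AddCommGroup W] [Module F W]
    [FiniteDimensional F V] [FiniteDimensional F W] (m n : ℕ)
    (hV : Module.finrank F V = m) (hW : Module.finrank F W = n) :
    Nonempty ((⋀[F]^(m * n) (V ⊗[F] W)) ≃ₗ[F]
      (⨂[F]^n (⋀[F]^m V)) ⊗[F] (⨂[F]^m (⋀[F]^n W))) := by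
  subst hV hW
  apply FiniteDimensional.nonempty_linearEquiv_of_finrank_eq
  simp only [exteriorPower.finrank_eq, finrank_tensorProduct, PiTensorProduct.finrank_eq,
    Nat.choose_self, Finset.prod_const_one, mul_one]
end
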